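/- Let F be an algebraically closed field of characteristic zero and let L be a finite-dimensional filiform Lie algebra over F with dim L ≥ 3. Then L admits a local derivation which is not a derivation, i.e. there exists a linear map Δ : L → L such that for every x ∈ L there is a derivation D_x of L with Δ(x) = D_x(x), but Δ itself does not satisfy the Leibniz rule. -/

import Mathlib

/-!
Pick a central `z` spanning `L^{n-2}` and `v ∈ L^{n-3}` with `ad v = μ ⊗ z`, where `μ ≠ 0`
vanishes on `L¹`. As `L/L¹` is two-dimensional there is a functional `g` vanishing on `L¹`
with `g ∧ μ ≠ 0`, and `Δ = g ⊗ v` violates the Leibniz rule on any pair `a, b` with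
`(g ∧ μ)(a, b) ≠ 0`. Since also `dim L¹/L² = 1`, the bracket identifies `Λ²(L/L¹)`
with `L¹/L²`, so `g ∧ μ = h ∘ ⁅·, ·⁆` for a functional `h`, and then `g ⊗ v + h ⊗ z` is a
derivation. It differs from `Δ` by `h ⊗ z`, which at a given `x ∉ L¹` is matched by a central
derivation `f ⊗ z` with `f(L¹) = 0` and `f x = h x`; on `L¹` the map `Δ` vanishes.
-/

open Module LieModule

section LinearAlgebra

variable {K V : Type*} [Field K] [AddCommGroup V] [Module K V]

theorem Submodule.exists_dual_apply_eq_of_notMem {W : Submodule K V} {c : V} (hc : c ∉ W)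
    (t : K) : ∃ f : Dual K V, f c = t ∧ W ≤ LinearMap.ker f := by
  obtain ⟨f, hf, hfc⟩ := LinearMap.exists_extend_of_notMem (0 : W →ₗ[K] K) hc t
  exact ⟨f, hfc, fun w hw => by simpa using LinearMap.congr_fun hf ⟨w, hw⟩⟩

theorem Submodule.exists_dual_pair_of_le_ker [FiniteDimensional K V] {W : Submodule K V}
    (hW : finrank K W + 2 ≤ finrank K V) {μ : Dual K V} (hμ : μ ≠ 0)
    (hWμ : W ≤ LinearMap.ker μ) :
    ∃ (g : Dual K V) (a b : V),
      W ≤ LinearMap.ker g ∧ g a = 1 ∧ μ a = 0 ∧ g b = 0 ∧ μ b = 1 := by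
  have hker : finrank K V ≤ finrank K (LinearMap.ker μ) + 1 := by
    have := LinearMap.finrank_range_add_finrank_ker μ
    have := (LinearMap.range μ).finrank_le
    rw [finrank_self] at this
    omega
  obtain ⟨a, haμ, haW⟩ := SetLike.exists_of_lt (lt_of_le_of_ne hWμ (by rintro rfl; omega))
  obtain ⟨g, hga, hWg⟩ := exists_dual_apply_eq_of_notMem haW 1
  obtain ⟨b, hb⟩ : ∃ b, μ b = 1 := by
    obtain ⟨c, hc⟩ := DFunLike.ne_iff.mp hμ
    exact ⟨(μ c)⁻¹ • c, by simpa using inv_mul_cancel₀ hc⟩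
  rw [LinearMap.mem_ker] at haμ
  exact ⟨g, a, b - g b • a, hWg, hga, haμ, by simp [hga], by simp [haμ, hb]⟩

theorem Submodule.sub_smul_sub_smul_mem_of_dual_pair [FiniteDimensional K V]
    {W : Submodule K V} (hW : finrank K W + 2 = finrank K V) {g μ : Dual K V}
    (hWg : W ≤ LinearMap.ker g) (hWμ : W ≤ LinearMap.ker μ) {a b : V}
    (hga : g a = 1) (hμa : μ a = 0) (hgb : g b = 0) (hμb : μ b = 1) (x : V) :
    x - g x • a - μ x • b ∈ W := by
  have hsurj : Function.Surjective (g.prod μ) := fun p =>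
    ⟨p.1 • a + p.2 • b, by simp [hga, hμa, hgb, hμb]⟩
  have hWker : W = LinearMap.ker (g.prod μ) := by
    refine eq_of_le_of_finrank_eq (by rw [LinearMap.ker_prod]; exact le_inf hWg hWμ) ?_
    have := LinearMap.finrank_range_add_finrank_ker (g.prod μ)
    rw [LinearMap.range_eq_top.mpr hsurj, finrank_top, finrank_prod, finrank_self] at this
    omega
  rw [hWker, LinearMap.mem_ker]
  simp [hga, hμa, hgb, hμb]

end LinearAlgebra

section LowerCentralSeries

variable {R L : Type*} [CommRing R] [LieRing L] [LieAlgebra R L]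

theorem lie_mem_lowerCentralSeries_add_one {j k : ℕ} {x y : L}
    (hx : x ∈ lowerCentralSeries R L L j) (hy : y ∈ lowerCentralSeries R L L k) :
    ⁅x, y⁆ ∈ lowerCentralSeries R L L (j + k + 1) := by
  induction j generalizing k x y with
  | zero =>
    rw [zero_add, LieModule.lowerCentralSeries_succ]
    exact LieSubmodule.lie_mem_lie (LieSubmodule.mem_top x) hy
  | succ j ih =>
    rw [LieModule.lowerCentralSeries_succ, ← LieSubmodule.mem_toSubmodule,
      LieSubmodule.lieIdeal_oper_eq_linear_span'] at hx
    induction hx using Submodule.span_induction with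
    | mem _ hw =>
      obtain ⟨w, -, p, hp, rfl⟩ := hw
      have hpy : ⁅w, ⁅p, y⁆⁆ ∈ lowerCentralSeries R L L (j + 1 + k + 1) := by
        rw [show j + 1 + k + 1 = j + k + 1 + 1 by omega, LieModule.lowerCentralSeries_succ]
        exact LieSubmodule.lie_mem_lie (LieSubmodule.mem_top w) (ih hp hy)
      have hwy : ⁅p, ⁅w, y⁆⁆ ∈ lowerCentralSeries R L L (j + 1 + k + 1) := by
        rw [show j + 1 + k + 1 = j + (k + 1) + 1 by omega]
        refine ih hp ?_
        rw [LieModule.lowerCentralSeries_succ]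
        exact LieSubmodule.lie_mem_lie (LieSubmodule.mem_top w) hy
      rw [lie_lie]
      exact sub_mem hpy hwy
    | zero => simp
    | add _ _ _ _ h₁ h₂ => rw [add_lie]; exact add_mem h₁ h₂
    | smul t _ _ h => rw [smul_lie]; exact SMulMemClass.smul_mem t h

theorem lie_mem_lowerCentralSeries_one (x y : L) : ⁅x, y⁆ ∈ lowerCentralSeries R L L 1 :=
  lie_mem_lowerCentralSeries_add_one (j := 0) (k := 0) (by simp) (by simp)

theorem lie_sub_smul_lie_mem_lowerCentralSeries_two {g μ : Dual R L} {a b : L}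
    (hdecomp : ∀ x, x - g x • a - μ x • b ∈ lowerCentralSeries R L L 1) (x y : L) :
    ⁅x, y⁆ - (g x * μ y - g y * μ x) • ⁅a, b⁆ ∈ lowerCentralSeries R L L 2 := by
  have hexpand : ⁅x, y⁆ - (g x * μ y - g y * μ x) • ⁅a, b⁆ =
      ⁅x - g x • a - μ x • b, y⁆ + g x • ⁅a, y - g y • a - μ y • b⁆ +
        μ x • ⁅b, y - g y • a - μ y • b⁆ := by
    simp only [sub_lie, lie_sub, smul_lie, lie_smul, lie_self, ← lie_skew b a]
    module
  rw [hexpand]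
  refine add_mem (add_mem ?_ (SMulMemClass.smul_mem _ ?_)) (SMulMemClass.smul_mem _ ?_)
  · exact lie_mem_lowerCentralSeries_add_one (j := 1) (k := 0) (hdecomp x) (by simp)
  · exact lie_mem_lowerCentralSeries_add_one (j := 0) (k := 1) (by simp) (hdecomp y)
  · exact lie_mem_lowerCentralSeries_add_one (j := 0) (k := 1) (by simp) (hdecomp y)

end LowerCentralSeries

section Field

variable {K L : Type*} [Field K] [LieRing L] [LieAlgebra K L]

theorem exists_dual_apply_lie_eq [FiniteDimensional K L] {g μ : Dual K L} {a b : L}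
    (hdecomp : ∀ x, x - g x • a - μ x • b ∈ lowerCentralSeries K L L 1)
    (h21 : finrank K (lowerCentralSeries K L L 2) < finrank K (lowerCentralSeries K L L 1)) :
    ∃ h : Dual K L, ∀ x y : L, h ⁅x, y⁆ = g x * μ y - g y * μ x := by
  have hab : ⁅a, b⁆ ∉ lowerCentralSeries K L L 2 := by
    intro hab
    have hle : lowerCentralSeries K L L 1 ≤ lowerCentralSeries K L L 2 := by
      rw [LieModule.lowerCentralSeries_succ, LieSubmodule.lie_le_iff]
      intro x _ y _
      simpa using add_mem (lie_sub_smul_lie_mem_lowerCentralSeries_two hdecomp x y)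
        (SMulMemClass.smul_mem (g x * μ y - g y * μ x) hab)
    exact h21.not_ge <|
      Submodule.finrank_mono ((LieSubmodule.toSubmodule_le_toSubmodule _ _).mpr hle)
  obtain ⟨h, hab1, hh⟩ := Submodule.exists_dual_apply_eq_of_notMem
    (W := (lowerCentralSeries K L L 2).toSubmodule) hab 1
  refine ⟨h, fun x y => ?_⟩
  have := hh (lie_sub_smul_lie_mem_lowerCentralSeries_two hdecomp x y)
  rwa [LinearMap.mem_ker, map_sub, map_smul, hab1, smul_eq_mul, mul_one, sub_eq_zero] at this

theorem exists_lie_eq_smul_of_finrank_lowerCentralSeries_eq_one {k : ℕ}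
    (hk1 : finrank K (lowerCentralSeries K L L (k + 1)) = 1)
    (hk2 : lowerCentralSeries K L L (k + 2) = ⊥) :
    ∃ (v z : L) (μ : Dual K L), z ≠ 0 ∧ (∀ x : L, ⁅x, z⁆ = 0) ∧
      (∀ y : L, ⁅v, y⁆ = μ y • z) ∧ μ ≠ 0 ∧
      (lowerCentralSeries K L L 1).toSubmodule ≤ LinearMap.ker μ := by
  obtain ⟨⟨z, hzk⟩, hz0, hzspan⟩ := finrank_eq_one_iff'.mp hk1
  have hz : z ≠ 0 := by simpa using hz0
  have hcentral : ∀ x : L, ⁅x, z⁆ = 0 := fun x => by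
    have := LieSubmodule.lie_mem_lie (LieSubmodule.mem_top x) hzk
    rwa [← LieModule.lowerCentralSeries_succ, hk2, LieSubmodule.mem_bot] at this
  obtain ⟨v, hv, c, hvc⟩ : ∃ v ∈ lowerCentralSeries K L L k, ∃ c : L, ⁅v, c⁆ ≠ 0 := by
    by_contra! h
    have : lowerCentralSeries K L L (k + 1) = ⊥ := by
      rw [LieModule.lowerCentralSeries_succ, LieSubmodule.lie_eq_bot_iff]
      intro x _ m hm
      rw [← lie_skew, h m hm x, neg_zero]
    rw [this, LieSubmodule.mem_bot] at hzk
    exact hz hzk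
  obtain ⟨φ, hφz⟩ := Module.Projective.exists_dual_eq_one K hz
  have hv' : ∀ y, ⁅v, y⁆ = (φ ∘ₗ LieAlgebra.ad K L v) y • z := by
    intro y
    have hmem : ⁅v, y⁆ ∈ lowerCentralSeries K L L (k + 1) := by
      rw [← lie_skew, LieModule.lowerCentralSeries_succ]
      exact neg_mem (LieSubmodule.lie_mem_lie (LieSubmodule.mem_top y) hv)
    obtain ⟨t, ht⟩ := hzspan ⟨_, hmem⟩
    have ht' : t • z = ⁅v, y⁆ := congrArg Subtype.val ht
    simp [← ht', hφz]
  refine ⟨v, z, φ ∘ₗ LieAlgebra.ad K L v, hz, hcentral, hv', fun hμ => hvc ?_,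
    fun y hy => ?_⟩
  · rw [hv', hμ, LinearMap.zero_apply, zero_smul]
  · have := lie_mem_lowerCentralSeries_add_one hv hy
    rw [hk2, LieSubmodule.mem_bot] at this
    simp [this]

def IsLocalDerivation (Δ : L →ₗ[K] L) : Prop :=
  ∀ x, ∃ D : LieDerivation K L L, Δ x = D x

theorem exists_lieDerivation_eq_smulRight_of_isCentral {f : Dual K L} {z : L}
    (hz : ∀ x : L, ⁅x, z⁆ = 0) (hf : ∀ x y : L, f ⁅x, y⁆ = 0) :
    ∃ D : LieDerivation K L L, ∀ x, D x = f x • z :=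
  ⟨{ toLinearMap := f.smulRight z, leibniz' := fun x y => by simp [hf, hz] }, fun _ => rfl⟩

theorem exists_lieDerivation_eq_smulRight_add_smulRight {g μ h : Dual K L} {v z : L}
    (hz : ∀ x : L, ⁅x, z⁆ = 0) (hv : ∀ y, ⁅v, y⁆ = μ y • z) (hg : ∀ x y : L, g ⁅x, y⁆ = 0)
    (hh : ∀ x y : L, h ⁅x, y⁆ = g x * μ y - g y * μ x) :
    ∃ D : LieDerivation K L L, ∀ x, D x = g x • v + h x • z := by
  refine ⟨{ toLinearMap := g.smulRight v + h.smulRight z, leibniz' := fun x y => ?_ },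
    fun _ => rfl⟩
  simp only [LinearMap.add_apply, LinearMap.smulRight_apply, hg, hh, lie_add, lie_smul, hz,
    ← lie_skew _ v, hv]
  module

theorem isLocalDerivation_sub_smulRight (E : LieDerivation K L L) {h : Dual K L} {z : L}
    (hz : ∀ x : L, ⁅x, z⁆ = 0) (hE : ∀ x ∈ lowerCentralSeries K L L 1, E x = h x • z) :
    IsLocalDerivation ((E : L →ₗ[K] L) - h.smulRight z) := by
  intro x
  by_cases hx : x ∈ lowerCentralSeries K L L 1
  · exact ⟨0, by simp [hE x hx]⟩
  · obtain ⟨f, hfx, hf⟩ := Submodule.exists_dual_apply_eq_of_notMem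
      (W := (lowerCentralSeries K L L 1).toSubmodule) hx (h x)
    obtain ⟨D, hD⟩ := exists_lieDerivation_eq_smulRight_of_isCentral hz
      (fun a b => hf (lie_mem_lowerCentralSeries_one a b))
    exact ⟨E - D, by simp [hD, hfx]⟩

end Field

theorem filiform_admits_local_derivation_not_derivation_general
    (F : Type*) [Field F]
    (L : Type*) [LieRing L] [LieAlgebra F L] [FiniteDimensional F L]
    (n : ℕ) (hn : 3 ≤ n) (hdim : Module.finrank F L = n)
    (hfil : ∀ k : ℕ, 1 ≤ k → k ≤ n - 1 →
      Module.finrank F ↥(LieModule.lowerCentralSeries F L L k) = n - k - 1) :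
    ∃ Δ : L →ₗ[F] L,
      (∀ x : L, ∃ D : LieDerivation F L L, Δ x = D x) ∧
      ¬ (∀ x y : L, Δ ⁅x, y⁆ = ⁅Δ x, y⁆ + ⁅x, Δ y⁆) := by
  have h1 := hfil 1 le_rfl (by omega)
  have h2 := hfil 2 (by omega) (by omega)
  have hL1 : finrank F (lowerCentralSeries F L L 1).toSubmodule + 2 = finrank F L := by
    change finrank F (lowerCentralSeries F L L 1) + 2 = _
    omega
  have htop : finrank F (lowerCentralSeries F L L (n - 3 + 1)) = 1 := by
    rw [show n - 3 + 1 = n - 2 by omega, hfil (n - 2) (by omega) (by omega)]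
    omega
  have hbot : lowerCentralSeries F L L (n - 3 + 2) = ⊥ := by
    rw [show n - 3 + 2 = n - 1 by omega, ← LieSubmodule.toSubmodule_eq_bot,
      ← Submodule.finrank_eq_zero]
    exact (hfil (n - 1) (by omega) le_rfl).trans (by omega)
  obtain ⟨v, z, μ, hz0, hz, hv, hμ, hμL1⟩ :=
    exists_lie_eq_smul_of_finrank_lowerCentralSeries_eq_one htop hbot
  obtain ⟨g, a, b, hgL1, hga, hμa, hgb, hμb⟩ :=
    Submodule.exists_dual_pair_of_le_ker hL1.le hμ hμL1
  have hdecomp := Submodule.sub_smul_sub_smul_mem_of_dual_pair hL1 hgL1 hμL1 hga hμa hgb hμb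
  have hg : ∀ x y : L, g ⁅x, y⁆ = 0 := fun x y => hgL1 (lie_mem_lowerCentralSeries_one x y)
  obtain ⟨h, hh⟩ := exists_dual_apply_lie_eq hdecomp (by omega)
  obtain ⟨E, hE⟩ := exists_lieDerivation_eq_smulRight_add_smulRight hz hv hg hh
  have hΔ : g.smulRight v = (E : L →ₗ[F] L) - h.smulRight z := by
    ext x
    simp [hE]
  refine ⟨g.smulRight v, hΔ ▸ isLocalDerivation_sub_smulRight E hz fun x hx => ?_,
    fun hleib => hz0 ?_⟩
  · simp [hE, LinearMap.mem_ker.mp (hgL1 hx)]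
  · simpa [hg, hga, hgb, hv, hμb] using (hleib a b).symm

/-- Every finite-dimensional filiform Lie algebra `L` of dimension `n ≥ 3` over an
algebraically closed field of characteristic zero (filiform: the terms `L^k` of the lower
central series satisfy `dim L^k = n - k - 1` for `1 ≤ k ≤ n - 1`) admits a local
derivation which is not a derivation. -/
theorem filiform_admits_local_derivation_not_derivation
    (F : Type*) [Field F] [IsAlgClosed F] [CharZero F]
    (L : Type*) [LieRing L] [LieAlgebra F L] [FiniteDimensional F L]
    (n : ℕ) (hn : 3 ≤ n) (hdim : Module.finrank F L = n)
    (hfil : ∀ k : ℕ, 1 ≤ k → k ≤ n - 1 →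
      Module.finrank F ↥(LieModule.lowerCentralSeries F L L k) = n - k - 1) :
    ∃ Δ : L →ₗ[F] L,
      (∀ x : L, ∃ D : LieDerivation F L L, Δ x = D x) ∧
      ¬ (∀ x y : L, Δ ⁅x, y⁆ = ⁅Δ x, y⁆ + ⁅x, Δ y⁆) :=
  filiform_admits_local_derivation_not_derivation_general F L n hn hdim hfil
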